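/- Fix a finite set 𝔯 of resources and a finite alphabet A with involution a ↦ ā and resource map ρ : A → 2^𝔯 with ρ(ā) = ρ(a) and ρ(a) ≠ ∅ for all a ∈ A. Let N_L be the finite monoid with involution of triples and zero described above, and let M(A,ρ) be the trace monoid with its involution. Then there is a (unique) morphism of monoids with involution μ_L : M(A,ρ) → N_L with μ_L(a) = ({a}, ρ(a), {a}) for every letter a ∈ A, and for every g ∈ M(A,ρ): μ_L(g) ≠ 0 if and only if g is reduced, i.e., there are no p, q ∈ M(A,ρ) and a ∈ A with g = p·(a ā)·q. -/

import Mathlib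

open scoped Classical

universe u

/-- The partial-commutation relation on words: `ab = ba` whenever `ρ a ∩ ρ b = ∅`. -/
def traceRel {R : Type u} (Γ : Type u) (ρ : Γ → Set R) :
    FreeMonoid Γ → FreeMonoid Γ → Prop := fun u v =>
  ∃ a b : Γ, ρ a ∩ ρ b = ∅ ∧ u = FreeMonoid.of a * FreeMonoid.of b ∧
    v = FreeMonoid.of b * FreeMonoid.of a

/-- The congruence on the free monoid generated by partial commutation. -/
def traceCon {R : Type u} (Γ : Type u) (ρ : Γ → Set R) : Con (FreeMonoid Γ) :=
  conGen (traceRel Γ ρ)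

/-- The trace monoid `M(Γ, ρ)`. -/
abbrev Trace {R : Type u} (Γ : Type u) (ρ : Γ → Set R) : Type u :=
  (traceCon Γ ρ).Quotient

/-- Canonical projection from words to traces. -/
def traceMk {R Γ : Type u} (ρ : Γ → Set R) : FreeMonoid Γ →* Trace Γ ρ :=
  (traceCon Γ ρ).mk'

/-- The trace of a single letter. -/
def traceOf {R Γ : Type u} (ρ : Γ → Set R) (a : Γ) : Trace Γ ρ :=
  traceMk ρ (FreeMonoid.of a)

/-- Word-level involution: reverse the word and apply `bar` letterwise. -/
def wordStar {Γ : Type u} (bar : Γ → Γ) (u : FreeMonoid Γ) : FreeMonoid Γ :=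
  FreeMonoid.ofList (((FreeMonoid.toList u).map bar).reverse)

/-- The carrier of `N_L`: a zero element (`none`) together with triples
`(P, S, R) ∈ 2^A × 2^𝔯 × 2^A`. -/
abbrev NLCarrier (A R : Type u) : Type u := Option (Set A × Set R × Set A)

/-- The defining conditions of `N_L`: `ρ(a) ⊆ S` for all `a ∈ P ∪ R`, and the letters of
`P` (resp. of `R`) are pairwise resource-disjoint. -/
def NLValid {A R : Type u} (ρ : A → Set R) : NLCarrier A R → Prop
  | none => True
  | some (P, S, Rt) =>
      (∀ a ∈ P ∪ Rt, ρ a ⊆ S) ∧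
      (∀ a ∈ P, ∀ b ∈ P, a ≠ b → ρ a ∩ ρ b = ∅) ∧
      (∀ a ∈ Rt, ∀ b ∈ Rt, a ≠ b → ρ a ∩ ρ b = ∅)

/-- Multiplication of `N_L`: `0` is absorbing; `(P,S,R)·(P',S',R') = 0` if some `a ∈ R`
has `ā ∈ P'`, and otherwise it is
`(P ∪ {a ∈ P' : ρ a ∩ S = ∅}, S ∪ S', R' ∪ {a ∈ R : ρ a ∩ S' = ∅})`. -/
noncomputable def NLmul {A R : Type u} (bar : A → A) (ρ : A → Set R) :
    NLCarrier A R → NLCarrier A R → NLCarrier A R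
  | none, _ => none
  | _, none => none
  | some (P, S, Rt), some (P', S', R') =>
      if ∃ a ∈ Rt, bar a ∈ P' then none
      else some (P ∪ {a ∈ P' | ρ a ∩ S = ∅}, S ∪ S', R' ∪ {a ∈ Rt | ρ a ∩ S' = ∅})

/-- The identity element `(∅, ∅, ∅)` of `N_L`. -/
def NLone {A R : Type u} : NLCarrier A R := some (∅, ∅, ∅)

/-- The involution of `N_L`: `0̄ = 0` and `(P,S,R)‾ = (R̄, S, P̄)`. -/
def NLstar {A R : Type u} (bar : A → A) : NLCarrier A R → NLCarrier A R
  | none => none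
  | some (P, S, Rt) => some (bar '' Rt, S, bar '' P)

/-!
`N_L` is a monoid with zero and involution: associativity of its product uses `ρ(ā) = ρ(a)`.
Its generators `({a}, ρ(a), {a})` and `({b}, ρ(b), {b})` commute whenever `ρ(a) ∩ ρ(b) = ∅`,
because `ρ(a) ≠ ∅` excludes `b = ā`; so the free extension of `a ↦ ({a}, ρ(a), {a})` factors
through the trace monoid, and it respects the involution because both involutions are
anti-multiplicative and agree on letters. Uniqueness holds since letters generate.

A factor `a ā` is sent to `0`. Conversely, every letter of the `P`-component of `μ_L(w)` can be
commuted to the front of `w`; so if `μ_L(c w) = 0` while `μ_L(w) ≠ 0`, then `c̄` lies in that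
component and `c w ≡ c c̄ t`.
-/

section

variable {R A : Type u} {bar : A → A} {ρ : A → Set R}

@[simp] lemma NLmul_none_left (x : NLCarrier A R) : NLmul bar ρ none x = none := by
  cases x <;> rfl

@[simp] lemma NLmul_none_right (x : NLCarrier A R) : NLmul bar ρ x none = none := by
  cases x <;> rfl

lemma NLmul_some_some (P : Set A) (S : Set R) (Rt P' : Set A) (S' : Set R) (R' : Set A) :
    NLmul bar ρ (some (P, S, Rt)) (some (P', S', R')) =
      if ∃ a ∈ Rt, bar a ∈ P' then none
      else some (P ∪ {a ∈ P' | ρ a ∩ S = ∅}, S ∪ S', R' ∪ {a ∈ Rt | ρ a ∩ S' = ∅}) := rfl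

lemma NLmul_NLone_left (x : NLCarrier A R) : NLmul bar ρ NLone x = x := by
  rcases x with _ | ⟨P, S, Rt⟩
  · rfl
  · simp [NLone, NLmul_some_some]

lemma NLmul_NLone_right (x : NLCarrier A R) : NLmul bar ρ x NLone = x := by
  rcases x with _ | ⟨P, S, Rt⟩
  · rfl
  · simp [NLone, NLmul_some_some]

lemma NLmul_assoc (hρ : ∀ a, ρ (bar a) = ρ a) (x y z : NLCarrier A R) :
    NLmul bar ρ (NLmul bar ρ x y) z = NLmul bar ρ x (NLmul bar ρ y z) := by
  rcases x with _ | ⟨P₁, S₁, R₁⟩; · rfl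
  rcases y with _ | ⟨P₂, S₂, R₂⟩; · simp
  rcases z with _ | ⟨P₃, S₃, R₃⟩; · simp
  by_cases h₁₂ : ∃ a ∈ R₁, bar a ∈ P₂
  · rw [NLmul_some_some P₁, if_pos h₁₂, NLmul_none_left, NLmul_some_some P₂]
    split_ifs with h₂₃
    · rfl
    · obtain ⟨a, ha, hb⟩ := h₁₂
      rw [NLmul_some_some, if_pos ⟨a, ha, Or.inl hb⟩]
  by_cases h₂₃ : ∃ a ∈ R₂, bar a ∈ P₃
  · rw [NLmul_some_some P₂, if_pos h₂₃, NLmul_none_right, NLmul_some_some P₁, if_neg h₁₂]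
    obtain ⟨a, ha, hb⟩ := h₂₃
    rw [NLmul_some_some, if_pos ⟨a, Or.inl ha, hb⟩]
  have hclash : (∃ a ∈ R₂ ∪ {a ∈ R₁ | ρ a ∩ S₂ = ∅}, bar a ∈ P₃) ↔
      ∃ a ∈ R₁, bar a ∈ P₂ ∪ {a ∈ P₃ | ρ a ∩ S₂ = ∅} := by
    simp only [Set.mem_union, Set.mem_sep_iff, hρ]
    constructor
    · rintro ⟨a, ha | ⟨ha, hS⟩, hb⟩
      · exact absurd ⟨a, ha, hb⟩ h₂₃
      · exact ⟨a, ha, Or.inr ⟨hb, hS⟩⟩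
    · rintro ⟨a, ha, hb | ⟨hb, hS⟩⟩
      · exact absurd ⟨a, ha, hb⟩ h₁₂
      · exact ⟨a, Or.inr ⟨ha, hS⟩, hb⟩
  rw [NLmul_some_some P₁, if_neg h₁₂, NLmul_some_some P₂, if_neg h₂₃, NLmul_some_some,
    NLmul_some_some, hclash]
  split_ifs
  · rfl
  · refine congrArg some (Prod.ext ?_ (Prod.ext (Set.union_assoc _ _ _) ?_)) <;> ext a <;>
      simp only [Set.mem_union, Set.mem_ofPred_eq, Set.inter_union_distrib_left,
        Set.union_empty_iff] <;> tauto

lemma NLstar_mul (hbar : Function.Involutive bar) (hρ : ∀ a, ρ (bar a) = ρ a)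
    (x y : NLCarrier A R) :
    NLstar bar (NLmul bar ρ x y) = NLmul bar ρ (NLstar bar y) (NLstar bar x) := by
  rcases x with _ | ⟨P₁, S₁, R₁⟩; · simp [NLstar]
  rcases y with _ | ⟨P₂, S₂, R₂⟩; · simp [NLstar]
  simp only [NLstar, NLmul_some_some, hbar.image_eq_preimage_symm]
  have hclash : (∃ a ∈ bar ⁻¹' P₂, bar a ∈ bar ⁻¹' R₁) ↔ ∃ a ∈ R₁, bar a ∈ P₂ := by
    simp only [Set.mem_preimage, hbar _, and_comm]
  have hsep : ∀ (s : Set A) (T : Set R),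
      bar ⁻¹' {a ∈ s | ρ a ∩ T = ∅} = {a ∈ bar ⁻¹' s | ρ a ∩ T = ∅} := by
    intro s T
    ext a
    simp only [Set.mem_preimage, Set.mem_ofPred_eq, hρ]
  simp only [hclash]
  split_ifs
  · rfl
  · simp only [Set.preimage_union, hsep, Set.union_comm S₁]

end

/-- Type synonym of `NLCarrier` carrying the monoid-with-zero and involution structure of `N_L`;
`none` is the zero. -/
def NL {R A : Type u} (_bar : A → A) (_ρ : A → Set R) : Type u := NLCarrier A R

namespace NL

variable {R A : Type u} {bar : A → A} {ρ : A → Set R}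

noncomputable instance [Fact (∀ a, ρ (bar a) = ρ a)] : MonoidWithZero (NL bar ρ) where
  mul := NLmul bar ρ
  one := NLone
  zero := none
  mul_assoc := NLmul_assoc Fact.out
  one_mul := NLmul_NLone_left
  mul_one := NLmul_NLone_right
  zero_mul := NLmul_none_left
  mul_zero := NLmul_none_right

instance : Star (NL bar ρ) := ⟨NLstar bar⟩

noncomputable instance [Fact (Function.Involutive bar)] [Fact (∀ a, ρ (bar a) = ρ a)] :
    StarMul (NL bar ρ) where
  star_involutive x := by
    rcases x with _ | ⟨P, S, Rt⟩
    · rfl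
    · change some (bar '' (bar '' P), S, bar '' (bar '' Rt)) = some (P, S, Rt)
      simp only [Set.image_image, (Fact.out : Function.Involutive bar) _, Set.image_id']
  star_mul := NLstar_mul Fact.out Fact.out

variable (bar ρ) in
def triple (P : Set A) (S : Set R) (Rt : Set A) : NL bar ρ := some (P, S, Rt)

variable (bar ρ) in
def gen (a : A) : NL bar ρ := triple bar ρ {a} (ρ a) {a}

variable [Fact (∀ a, ρ (bar a) = ρ a)]

lemma mul_def (x y : NL bar ρ) : x * y = NLmul bar ρ x y := rfl

lemma one_eq_triple : (1 : NL bar ρ) = triple bar ρ ∅ ∅ ∅ := rfl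

lemma triple_ne_zero (P : Set A) (S : Set R) (Rt : Set A) : triple bar ρ P S Rt ≠ 0 :=
  Option.some_ne_none _

lemma eq_zero_or_eq_triple (x : NL bar ρ) : x = 0 ∨ ∃ P S Rt, x = triple bar ρ P S Rt := by
  rcases x with _ | ⟨P, S, Rt⟩
  · exact Or.inl rfl
  · exact Or.inr ⟨P, S, Rt, rfl⟩

lemma gen_mul_triple (c : A) (P : Set A) (S : Set R) (Rt : Set A) :
    gen bar ρ c * triple bar ρ P S Rt =
      if bar c ∈ P then 0
      else triple bar ρ ({c} ∪ {x ∈ P | ρ x ∩ ρ c = ∅}) (ρ c ∪ S)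
        (Rt ∪ {x ∈ ({c} : Set A) | ρ x ∩ S = ∅}) := by
  rw [mul_def, gen, triple, triple, NLmul_some_some]
  simp only [Set.mem_singleton_iff, exists_eq_left]
  rfl

lemma gen_mul_gen_bar (a : A) : gen bar ρ a * gen bar ρ (bar a) = 0 :=
  if_pos ⟨a, rfl, rfl⟩

lemma gen_mul_gen_comm (hρne : ∀ a, ρ a ≠ ∅) {a b : A} (hab : ρ a ∩ ρ b = ∅) :
    gen bar ρ a * gen bar ρ b = gen bar ρ b * gen bar ρ a := by
  have hρ : ∀ a, ρ (bar a) = ρ a := Fact.out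
  have hne : ∀ {c d : A}, ρ c ∩ ρ d = ∅ → bar c ≠ d := by
    rintro c _ hcd rfl
    exact hρne c (by rwa [hρ, Set.inter_self] at hcd)
  have hba : ρ b ∩ ρ a = ∅ := by rwa [Set.inter_comm]
  have hsep : ∀ {c d : A}, ρ c ∩ ρ d = ∅ → {x ∈ ({c} : Set A) | ρ x ∩ ρ d = ∅} = {c} :=
    fun hcd => Set.sep_eq_self_iff_mem_true.mpr fun _ hx => (Set.mem_singleton_iff.mp hx) ▸ hcd
  rw [mul_def, mul_def, gen, gen, triple, triple, NLmul_some_some, NLmul_some_some, hsep hab,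
    hsep hba]
  simp only [Set.mem_singleton_iff, exists_eq_left, hne hab, hne hba, if_false,
    Set.union_comm {a}, Set.union_comm (ρ a)]
  rfl

lemma star_gen (a : A) : star (gen bar ρ a) = gen bar ρ (bar a) := by
  change some (bar '' {a}, ρ a, bar '' {a}) = some ({bar a}, ρ (bar a), {bar a})
  rw [Set.image_singleton, (Fact.out : ∀ a, ρ (bar a) = ρ a)]

end NL

lemma wordStar_mul {Γ : Type u} (bar : Γ → Γ) (u v : FreeMonoid Γ) :
    wordStar bar (u * v) = wordStar bar v * wordStar bar u := by
  simp [wordStar]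

lemma wordStar_of {Γ : Type u} (bar : Γ → Γ) (a : Γ) :
    wordStar bar (FreeMonoid.of a) = FreeMonoid.of (bar a) := rfl

lemma wordStar_one {Γ : Type u} (bar : Γ → Γ) : wordStar bar 1 = 1 := rfl

lemma traceMk_of_mul {R Γ : Type u} (ρ : Γ → Set R) (a : Γ) (w : FreeMonoid Γ) :
    traceMk ρ (FreeMonoid.of a * w) = traceOf ρ a * traceMk ρ w :=
  map_mul _ _ _

lemma traceOf_mul_comm {R Γ : Type u} {ρ : Γ → Set R} {a b : Γ} (h : ρ a ∩ ρ b = ∅) :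
    traceOf ρ a * traceOf ρ b = traceOf ρ b * traceOf ρ a := by
  simp only [traceOf, ← map_mul]
  exact (traceCon Γ ρ).eq.mpr (ConGen.Rel.of _ _ ⟨a, b, h, rfl, rfl⟩)

section MuL

open NL

variable {R A : Type u} {bar : A → A} {ρ : A → Set R} [Fact (∀ a, ρ (bar a) = ρ a)]

variable (bar ρ) in
noncomputable def muFree : FreeMonoid A →* NL bar ρ := FreeMonoid.lift (gen bar ρ)

lemma muFree_of (a : A) : muFree bar ρ (FreeMonoid.of a) = gen bar ρ a := rfl

lemma muFree_wordStar [Fact (Function.Involutive bar)] (u : FreeMonoid A) :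
    muFree bar ρ (wordStar bar u) = star (muFree bar ρ u) := by
  induction u using FreeMonoid.inductionOn' with
  | one => simp only [wordStar_one, map_one, star_one]
  | of_mul a u ih => rw [wordStar_mul, map_mul, map_mul, ih, wordStar_of, muFree_of, muFree_of,
      star_mul, star_gen]

lemma traceCon_le_ker_muFree (hρne : ∀ a, ρ a ≠ ∅) : traceCon A ρ ≤ Con.ker (muFree bar ρ) :=
  Con.conGen_le.mpr <| by
    rintro _ _ ⟨a, b, hab, rfl, rfl⟩
    simp only [Con.ker_rel, map_mul, muFree_of, gen_mul_gen_comm hρne hab]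

variable (bar) in
noncomputable def muTrace (hρne : ∀ a, ρ a ≠ ∅) : Trace A ρ →* NL bar ρ :=
  (traceCon A ρ).lift (muFree bar ρ) (traceCon_le_ker_muFree hρne)

lemma muTrace_traceOf (hρne : ∀ a, ρ a ≠ ∅) (a : A) :
    muTrace bar hρne (traceOf ρ a) = gen bar ρ a := rfl

lemma exists_traceMk_eq_traceOf_mul {w : FreeMonoid A} {P : Set A} {S : Set R} {Rt : Set A}
    (hw : muFree bar ρ w = triple bar ρ P S Rt) {b : A} (hb : b ∈ P) :
    ∃ t, traceMk ρ w = traceOf ρ b * t := by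
  induction w using FreeMonoid.inductionOn' generalizing P S Rt with
  | one =>
    rw [map_one, one_eq_triple] at hw
    cases hw
    exact absurd hb (Set.notMem_empty b)
  | of_mul c w ih =>
    rw [map_mul, muFree_of] at hw
    obtain hw₀ | ⟨P', S', R', hw'⟩ := eq_zero_or_eq_triple (muFree bar ρ w)
    · rw [hw₀, mul_zero] at hw
      exact absurd hw.symm (triple_ne_zero P S Rt)
    rw [hw', gen_mul_triple] at hw
    split_ifs at hw
    · exact absurd hw.symm (triple_ne_zero P S Rt)
    cases hw
    rcases hb with rfl | ⟨hbP', hbc⟩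
    · exact ⟨traceMk ρ w, traceMk_of_mul ρ _ w⟩
    · obtain ⟨t, ht⟩ := ih hw' hbP'
      refine ⟨traceOf ρ c * t, ?_⟩
      rw [traceMk_of_mul, ht, ← mul_assoc, ← mul_assoc, traceOf_mul_comm hbc]

lemma exists_factor_of_muFree_eq_zero {w : FreeMonoid A} (hw : muFree bar ρ w = 0) :
    ∃ (p q : Trace A ρ) (a : A), traceMk ρ w = p * (traceOf ρ a * traceOf ρ (bar a)) * q := by
  induction w using FreeMonoid.inductionOn' with
  | one => exact absurd hw (triple_ne_zero _ _ _)
  | of_mul c w ih =>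
    rw [map_mul, muFree_of] at hw
    obtain hw₀ | ⟨P', S', R', hw'⟩ := eq_zero_or_eq_triple (muFree bar ρ w)
    · obtain ⟨p, q, a, hpq⟩ := ih hw₀
      exact ⟨traceOf ρ c * p, q, a, by rw [traceMk_of_mul, hpq]; simp only [mul_assoc]⟩
    rw [hw', gen_mul_triple] at hw
    split_ifs at hw with hc
    · obtain ⟨t, ht⟩ := exists_traceMk_eq_traceOf_mul hw' hc
      exact ⟨1, t, c, by rw [traceMk_of_mul, ht, one_mul, ← mul_assoc]⟩
    · exact absurd hw (triple_ne_zero _ _ _)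

lemma muTrace_ne_zero_iff (hρne : ∀ a, ρ a ≠ ∅) (g : Trace A ρ) :
    muTrace bar hρne g ≠ 0 ↔
      ¬ ∃ (p q : Trace A ρ) (a : A), g = p * (traceOf ρ a * traceOf ρ (bar a)) * q := by
  refine not_congr ⟨fun hg => ?_, ?_⟩
  · obtain ⟨w, rfl⟩ := (traceCon A ρ).mk'_surjective g
    exact exists_factor_of_muFree_eq_zero hg
  · rintro ⟨p, q, a, rfl⟩
    rw [map_mul, map_mul, map_mul, muTrace_traceOf, muTrace_traceOf, gen_mul_gen_bar, mul_zero,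
      zero_mul]

variable (bar ρ) in
/-- `μ` is the morphism `μ_L` of monoids with involution. -/
def IsMuL (μ : Trace A ρ → NLCarrier A R) : Prop :=
  μ 1 = NLone ∧
    (∀ x y : Trace A ρ, μ (x * y) = NLmul bar ρ (μ x) (μ y)) ∧
    (∀ u : FreeMonoid A, μ (traceMk ρ (wordStar bar u)) = NLstar bar (μ (traceMk ρ u))) ∧
    ∀ a : A, μ (traceOf ρ a) = some ({a}, ρ a, {a})

lemma isMuL_muTrace [Fact (Function.Involutive bar)] (hρne : ∀ a, ρ a ≠ ∅) :
    IsMuL bar ρ (muTrace bar hρne) :=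
  ⟨map_one (muTrace bar hρne), map_mul (muTrace bar hρne), muFree_wordStar, fun _ => rfl⟩

lemma IsMuL.eq_muTrace (hρne : ∀ a, ρ a ≠ ∅) {μ : Trace A ρ → NLCarrier A R}
    (hμ : IsMuL bar ρ μ) : μ = muTrace bar hρne :=
  let f : Trace A ρ →* NL bar ρ := { toFun := μ, map_one' := hμ.1, map_mul' := hμ.2.1 }
  congrArg DFunLike.coe (Con.hom_ext (FreeMonoid.hom_eq hμ.2.2.2) : f = muTrace bar hρne)

end MuL

theorem stmt_10_general {R : Type u} {A : Type u}
    (bar : A → A) (hbar : Function.Involutive bar)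
    (ρ : A → Set R) (hρ : ∀ a, ρ (bar a) = ρ a) (hρne : ∀ a : A, ρ a ≠ ∅) :
    (∃! μ : Trace A ρ → NLCarrier A R,
      μ 1 = NLone ∧
      (∀ x y : Trace A ρ, μ (x * y) = NLmul bar ρ (μ x) (μ y)) ∧
      (∀ u : FreeMonoid A,
        μ (traceMk ρ (wordStar bar u)) = NLstar bar (μ (traceMk ρ u))) ∧
      (∀ a : A, μ (traceOf ρ a) = some ({a}, ρ a, {a}))) ∧
    ∀ μ : Trace A ρ → NLCarrier A R,
      (μ 1 = NLone ∧
       (∀ x y : Trace A ρ, μ (x * y) = NLmul bar ρ (μ x) (μ y)) ∧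
       (∀ u : FreeMonoid A,
         μ (traceMk ρ (wordStar bar u)) = NLstar bar (μ (traceMk ρ u))) ∧
       (∀ a : A, μ (traceOf ρ a) = some ({a}, ρ a, {a}))) →
      ∀ g : Trace A ρ, μ g ≠ none ↔
        ¬ ∃ (p q : Trace A ρ) (a : A),
            g = p * (traceOf ρ a * traceOf ρ (bar a)) * q := by
  have : Fact (Function.Involutive bar) := ⟨hbar⟩
  have : Fact (∀ a, ρ (bar a) = ρ a) := ⟨hρ⟩
  refine ⟨⟨muTrace bar hρne, isMuL_muTrace hρne, fun μ hμ => IsMuL.eq_muTrace hρne hμ⟩,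
    fun μ hμ g => ?_⟩
  rw [IsMuL.eq_muTrace hρne hμ]
  exact muTrace_ne_zero_iff hρne g

/-- There is a unique morphism of monoids with involution
`μ_L : M(A,ρ) → N_L` with `μ_L(a) = ({a}, ρ(a), {a})` for every letter `a`; and for every
trace `g`, `μ_L(g) ≠ 0` if and only if `g` is reduced (has no factor `a ā`). -/
theorem stmt_10 {R : Type u} [Fintype R] {A : Type u} [Fintype A]
    (bar : A → A) (hbar : Function.Involutive bar)
    (ρ : A → Set R) (hρ : ∀ a, ρ (bar a) = ρ a) (hρne : ∀ a : A, ρ a ≠ ∅) :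
    (∃! μ : Trace A ρ → NLCarrier A R,
      μ 1 = NLone ∧
      (∀ x y : Trace A ρ, μ (x * y) = NLmul bar ρ (μ x) (μ y)) ∧
      (∀ u : FreeMonoid A,
        μ (traceMk ρ (wordStar bar u)) = NLstar bar (μ (traceMk ρ u))) ∧
      (∀ a : A, μ (traceOf ρ a) = some ({a}, ρ a, {a}))) ∧
    ∀ μ : Trace A ρ → NLCarrier A R,
      (μ 1 = NLone ∧
       (∀ x y : Trace A ρ, μ (x * y) = NLmul bar ρ (μ x) (μ y)) ∧
       (∀ u : FreeMonoid A,
         μ (traceMk ρ (wordStar bar u)) = NLstar bar (μ (traceMk ρ u))) ∧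
       (∀ a : A, μ (traceOf ρ a) = some ({a}, ρ a, {a}))) →
      ∀ g : Trace A ρ, μ g ≠ none ↔
        ¬ ∃ (p q : Trace A ρ) (a : A),
            g = p * (traceOf ρ a * traceOf ρ (bar a)) * q :=
  stmt_10_general bar hbar ρ hρ hρne
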